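/- (Correctness of Algorithm 4 / Theorem 2.) Let σ be a finite alphabet with at most m distinct characters, let T : Fin n → Option σ be a text and P : Fin m → Option σ a pattern (none encodes a wild card), with m ≤ n and m ≥ 2. For an alignment offset i with i + m ≤ n, let H_i be the number of j < m with T(i+j) ≠ none, P(j) ≠ none and T(i+j) ≠ P(j). Fix reals ε with 0 < ε ≤ 1 and α > 0, and a natural number r with r ≥ 6(α+3)·(ln m)/ε². Draw r independent uniformly random functions Q₁, …, Q_r : σ → Bool, interpret Bool values as the integers 1 and 2 and extend each Q_ℓ to Option σ by sending none to 0, and set C[i] = Σ_{ℓ ≤ r} Σ_{j < m} (Q_ℓ(T(i+j)) − Q_ℓ(P(j)))² · Q_ℓ(T(i+j)) · Q_ℓ(P(j)). Then with probability at least 1 − m^{−α}, simultaneously for every alignment offset i with i + m ≤ n, it holds that (1−ε)·r·H_i ≤ C[i] ≤ (1+ε)·r·H_i; in particular the estimate h_i = C[i]/r lies in the interval [(1−ε)H_i, (1+ε)H_i]. -/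

import Mathlib

open scoped Classical

/-- The integer value assigned to an optional character (`none` = wild card, value `0`)
by a two-coloring `Q : σ → Bool`, with `false ↦ 1` and `true ↦ 2`. -/
def optVal {σ : Type*} (Q : σ → Bool) : Option σ → ℤ
  | none => 0
  | some x => if Q x then 2 else 1

/-- The wildcard-aware Hamming distance `H_i` of alignment offset `i`: the number of
positions `j < m` with `T(i+j) ≠ none`, `P(j) ≠ none` and `T(i+j) ≠ P(j)`. -/
noncomputable def hammingW {σ : Type*} {n m : ℕ} (T : Fin n → Option σ)
    (P : Fin m → Option σ) (i : ℕ) (h : i + m ≤ n) : ℕ :=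
  (Finset.univ.filter (fun j : Fin m =>
    T ⟨i + j.val, lt_of_lt_of_le (Nat.add_lt_add_left j.isLt i) h⟩ ≠ none ∧
    P j ≠ none ∧
    T ⟨i + j.val, lt_of_lt_of_le (Nat.add_lt_add_left j.isLt i) h⟩ ≠ P j)).card

/-- The counter `C[i]` of Algorithm 4 computed from the `r` random phases
`ω 0, …, ω (r-1) : σ → Bool`. -/
def algFourCount {σ : Type*} {n m r : ℕ} (T : Fin n → Option σ)
    (P : Fin m → Option σ) (ω : Fin r → σ → Bool) (i : ℕ) (h : i + m ≤ n) : ℤ :=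
  ∑ ℓ : Fin r, ∑ j : Fin m,
    (optVal (ω ℓ) (T ⟨i + j.val, lt_of_lt_of_le (Nat.add_lt_add_left j.isLt i) h⟩) -
        optVal (ω ℓ) (P j)) ^ 2 *
      optVal (ω ℓ) (T ⟨i + j.val, lt_of_lt_of_le (Nat.add_lt_add_left j.isLt i) h⟩) *
      optVal (ω ℓ) (P j)

/-!
For letters `a ≠ b` the summand `(Q a - Q b)² · Q a · Q b` equals `1 + s`, where the sign `s` is
`+1` if `Q a ≠ Q b` and `-1` otherwise. Hence `C[i]` is the sum, over the `H_i` mismatched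
positions with letters `a, b`, of `r + S_{ab}`, where `S_{ab}` is a sum of `r` independent fair
signs. By the Chernoff bound `|S_{ab}| > ε r` with probability at most
`2 exp (-ε² r / 2) ≤ 2 m^{-3(α+3)}`, and a union bound over the at most `m²` pairs of letters
leaves a failure probability of at most `m^{-α}`; off this event every `C[i]` lies within
`ε r H_i` of `r H_i`.
-/

open Finset Real

lemma card_filter_mul_exp_le_sum_exp {ι : Type*} [Fintype ι] (f : ι → ℝ) {c : ℝ} (hc : 0 ≤ c)
    (t : ℝ) : #{x | t ≤ f x} * exp (c * t) ≤ ∑ x, exp (c * f x) := by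
  rw [← nsmul_eq_mul]
  calc #{x | t ≤ f x} • exp (c * t) ≤ ∑ x with t ≤ f x, exp (c * f x) :=
        card_nsmul_le_sum _ _ _ fun x hx =>
          exp_le_exp.2 (mul_le_mul_of_nonneg_left (mem_filter.1 hx).2 hc)
    _ ≤ ∑ x, exp (c * f x) := sum_le_univ_sum_of_nonneg fun x => (exp_pos _).le

section SignSum

variable {τ : Type*} {r : ℕ}

def signSum (p : τ → Prop) [DecidablePred p] (ω : Fin r → τ) : ℝ :=
  ∑ ℓ, if p (ω ℓ) then 1 else -1

variable (p : τ → Prop) [DecidablePred p]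

lemma signSum_not (ω : Fin r → τ) : signSum (fun g => ¬ p g) ω = -signSum p ω := by
  simp only [signSum, ← sum_neg_distrib]
  refine sum_congr rfl fun ℓ _ => ?_
  by_cases h : p (ω ℓ) <;> simp [h]

variable {p} [Fintype τ]

lemma two_mul_card_filter_not (hp : 2 * #{g | p g} = Fintype.card τ) :
    2 * #{g | ¬ p g} = Fintype.card τ := by
  have := card_filter_add_card_filter_not (s := univ) fun g => p g
  rw [card_univ] at this
  omega

lemma sum_exp_mul_sign (hp : 2 * #{g | p g} = Fintype.card τ) (c : ℝ) :
    ∑ g, exp (c * if p g then 1 else -1) = Fintype.card τ * cosh c := by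
  have hp' : (2 * #{g | p g} : ℝ) = Fintype.card τ := by exact_mod_cast hp
  have hnp : (2 * #{g | ¬ p g} : ℝ) = Fintype.card τ := by
    exact_mod_cast two_mul_card_filter_not hp
  simp only [mul_ite, mul_one, mul_neg_one, apply_ite exp, sum_ite, sum_const, nsmul_eq_mul,
    cosh_eq]
  linear_combination (exp c / 2) * hp' + (exp (-c) / 2) * hnp

lemma sum_exp_mul_signSum (hp : 2 * #{g | p g} = Fintype.card τ) (c : ℝ) :
    ∑ ω : Fin r → τ, exp (c * signSum p ω) = (Fintype.card τ * cosh c) ^ r := by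
  simp only [signSum, mul_sum, exp_sum]
  rw [← Fintype.prod_sum (fun (_ : Fin r) g => exp (c * if p g then 1 else -1)),
    sum_exp_mul_sign hp, prod_const, card_univ, Fintype.card_fin]

end SignSum

section Chernoff

variable {τ : Type*} [Fintype τ] {r : ℕ} {p : τ → Prop} [DecidablePred p] {t : ℝ}

lemma card_filter_le_signSum_le (hp : 2 * #{g | p g} = Fintype.card τ) (ht : 0 ≤ t) :
    (#{ω : Fin r → τ | t ≤ signSum p ω} : ℝ) ≤ Fintype.card τ ^ r * exp (-t ^ 2 / (2 * r)) := by
  -- the Chernoff parameter `c = t / r` minimises `r c² / 2 - c t`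
  set c := t / r with hc
  have hexponent : r * (c ^ 2 / 2) - c * t = -t ^ 2 / (2 * r) := by
    rcases eq_or_ne (r : ℝ) 0 with hr | hr
    · simp [c, hr]
    · rw [hc]; field_simp; ring
  have hmgf : (#{ω : Fin r → τ | t ≤ signSum p ω} : ℝ) * exp (c * t) ≤
      Fintype.card τ ^ r * exp (r * (c ^ 2 / 2)) :=
    calc _ ≤ ∑ ω : Fin r → τ, exp (c * signSum p ω) :=
          card_filter_mul_exp_le_sum_exp _ (by positivity) t
      _ = (Fintype.card τ * cosh c) ^ r := sum_exp_mul_signSum hp c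
      _ ≤ (Fintype.card τ * exp (c ^ 2 / 2)) ^ r := by gcongr; exact cosh_le_exp_half_sq c
      _ = Fintype.card τ ^ r * exp (r * (c ^ 2 / 2)) := by rw [mul_pow, ← exp_nat_mul]
  rw [← hexponent, exp_sub, mul_div_assoc', le_div_iff₀ (exp_pos _)]
  exact hmgf

lemma card_filter_lt_abs_signSum_le (hp : 2 * #{g | p g} = Fintype.card τ) (ht : 0 ≤ t) :
    (#{ω : Fin r → τ | t < |signSum p ω|} : ℝ) ≤
      2 * (Fintype.card τ ^ r * exp (-t ^ 2 / (2 * r))) := by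
  have hsub : ({ω | t < |signSum p ω|} : Finset (Fin r → τ)) ⊆
      ({ω | t ≤ signSum p ω} : Finset (Fin r → τ)) ∪
        ({ω | t ≤ signSum (fun g => ¬ p g) ω} : Finset (Fin r → τ)) := by
    intro ω hω
    simp only [mem_filter, mem_univ, true_and, mem_union, signSum_not] at hω ⊢
    rcases lt_abs.1 hω with h | h
    · exact Or.inl h.le
    · exact Or.inr h.le
  calc (#{ω : Fin r → τ | t < |signSum p ω|} : ℝ)
      ≤ #{ω : Fin r → τ | t ≤ signSum p ω} + #{ω : Fin r → τ | t ≤ signSum (fun g => ¬ p g) ω} := by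
        exact_mod_cast (card_le_card hsub).trans (card_union_le _ _)
    _ ≤ _ := by
        linarith [card_filter_le_signSum_le hp ht (r := r),
          card_filter_le_signSum_le (two_mul_card_filter_not hp) ht (r := r)]

end Chernoff

section Colourings

variable {σ : Type*} [Fintype σ] [DecidableEq σ]

lemma two_mul_card_filter_apply_ne {a b : σ} (hab : a ≠ b) :
    2 * #{g : σ → Bool | g a ≠ g b} = Fintype.card (σ → Bool) := by
  -- flipping the colour of `a` swaps the colourings with `g a ≠ g b` and those with `g a = g b`
  let flip : Equiv.Perm (σ → Bool) :=
    Equiv.piCongrRight fun c => if c = a then Equiv.boolNot else Equiv.refl Bool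
  have hswap : #{g : σ → Bool | g a ≠ g b} = #{g : σ → Bool | ¬ g a ≠ g b} :=
    card_equiv flip fun g => by simp [flip, hab.symm, Bool.eq_not_iff]
  have := card_filter_add_card_filter_not (s := univ) fun g : σ → Bool => g a ≠ g b
  rw [card_univ] at this
  omega

lemma card_filter_exists_lt_abs_signSum_le {r : ℕ} {t : ℝ} (ht : 0 ≤ t) :
    (#{ω : Fin r → σ → Bool | ∃ a b, a ≠ b ∧ t < |signSum (fun g => g a ≠ g b) ω|} : ℝ) ≤
      Fintype.card σ ^ 2 * (2 * (Fintype.card (σ → Bool) ^ r * exp (-t ^ 2 / (2 * r)))) := by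
  have hsub : ({ω | ∃ a b, a ≠ b ∧ t < |signSum (fun g => g a ≠ g b) ω|} :
        Finset (Fin r → σ → Bool)) ⊆
      (univ.offDiag : Finset (σ × σ)).biUnion
        fun q => {ω | t < |signSum (fun g => g q.1 ≠ g q.2) ω|} := by
    intro ω hω
    simp only [mem_filter, mem_univ, true_and, mem_biUnion, mem_offDiag] at hω ⊢
    obtain ⟨a, b, hab, h⟩ := hω
    exact ⟨(a, b), hab, h⟩
  have hpairs : ((univ.offDiag : Finset (σ × σ)).card : ℝ) ≤ Fintype.card σ ^ 2 := by
    rw [offDiag_card, card_univ, sq]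
    exact_mod_cast Nat.sub_le _ _
  calc _ ≤ ∑ q ∈ (univ.offDiag : Finset (σ × σ)),
        (#{ω : Fin r → σ → Bool | t < |signSum (fun g => g q.1 ≠ g q.2) ω|} : ℝ) := by
        exact_mod_cast (card_le_card hsub).trans card_biUnion_le
    _ ≤ ∑ _q ∈ (univ.offDiag : Finset (σ × σ)),
        2 * (Fintype.card (σ → Bool) ^ r * exp (-t ^ 2 / (2 * r))) :=
        sum_le_sum fun q hq =>
          card_filter_lt_abs_signSum_le (two_mul_card_filter_apply_ne (mem_offDiag.1 hq).2.2) ht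
    _ ≤ _ := by
        rw [sum_const, nsmul_eq_mul]
        gcongr

end Colourings

section MismatchTerm

variable {σ : Type*}

def mismatchTerm (Q : σ → Bool) (x y : Option σ) : ℤ :=
  (optVal Q x - optVal Q y) ^ 2 * optVal Q x * optVal Q y

lemma algFourCount_eq_sum_mismatchTerm {n m r : ℕ} (T : Fin n → Option σ) (P : Fin m → Option σ)
    (ω : Fin r → σ → Bool) (i : ℕ) (h : i + m ≤ n) :
    (algFourCount T P ω i h : ℝ) = ∑ j : Fin m, ∑ ℓ : Fin r,
      (mismatchTerm (ω ℓ) (T ⟨i + j.val, lt_of_lt_of_le (Nat.add_lt_add_left j.isLt i) h⟩) (P j)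
        : ℝ) := by
  rw [algFourCount, sum_comm]
  push_cast [mismatchTerm]
  rfl

lemma mismatchTerm_eq_zero (Q : σ → Bool) {x y : Option σ} (h : x = none ∨ y = none ∨ x = y) :
    mismatchTerm Q x y = 0 := by
  rcases h with rfl | rfl | rfl <;> simp [mismatchTerm, optVal]

lemma mismatchTerm_some (Q : σ → Bool) (a b : σ) :
    (mismatchTerm Q (some a) (some b) : ℝ) = 1 + if Q a ≠ Q b then 1 else -1 := by
  simp only [mismatchTerm, optVal]
  cases Q a <;> cases Q b <;> norm_num

lemma sum_mismatchTerm_some {r : ℕ} (ω : Fin r → σ → Bool) (a b : σ) :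
    ∑ ℓ, (mismatchTerm (ω ℓ) (some a) (some b) : ℝ) = r + signSum (fun g => g a ≠ g b) ω := by
  simp only [mismatchTerm_some, sum_add_distrib, sum_const, card_univ, Fintype.card_fin,
    nsmul_eq_mul, mul_one, signSum]

end MismatchTerm

section Bounds

variable {σ : Type*} {r : ℕ} {ε : ℝ} {ω : Fin r → σ → Bool}

lemma sum_mismatchTerm_mem_bounds
    (hω : ∀ a b : σ, a ≠ b → |signSum (fun g => g a ≠ g b) ω| ≤ ε * r) (x y : Option σ) :
    (1 - ε) * r * (if x ≠ none ∧ y ≠ none ∧ x ≠ y then 1 else 0) ≤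
        ∑ ℓ, (mismatchTerm (ω ℓ) x y : ℝ) ∧
      ∑ ℓ, (mismatchTerm (ω ℓ) x y : ℝ) ≤
        (1 + ε) * r * (if x ≠ none ∧ y ≠ none ∧ x ≠ y then 1 else 0) := by
  by_cases hxy : x ≠ none ∧ y ≠ none ∧ x ≠ y
  · obtain ⟨hx, hy, hne⟩ := hxy
    obtain ⟨a, rfl⟩ := Option.ne_none_iff_exists'.1 hx
    obtain ⟨b, rfl⟩ := Option.ne_none_iff_exists'.1 hy
    have hab := abs_le.1 (hω a b fun h => hne (congrArg some h))
    rw [if_pos ⟨hx, hy, hne⟩, sum_mismatchTerm_some]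
    constructor <;> linarith
  · have hzero : ∀ ℓ, mismatchTerm (ω ℓ) x y = 0 := fun ℓ =>
      mismatchTerm_eq_zero _ (by tauto)
    simp [hxy, hzero]

lemma algFourCount_mem_bounds {n m : ℕ} (T : Fin n → Option σ) (P : Fin m → Option σ)
    (hω : ∀ a b : σ, a ≠ b → |signSum (fun g => g a ≠ g b) ω| ≤ ε * r) (i : ℕ) (h : i + m ≤ n) :
    (1 - ε) * r * (hammingW T P i h : ℝ) ≤ (algFourCount T P ω i h : ℝ) ∧
      (algFourCount T P ω i h : ℝ) ≤ (1 + ε) * r * (hammingW T P i h : ℝ) := by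
  rw [algFourCount_eq_sum_mismatchTerm, hammingW, ← sum_boole, mul_sum, mul_sum]
  exact ⟨sum_le_sum fun j _ => (sum_mismatchTerm_mem_bounds hω _ _).1,
    sum_le_sum fun j _ => (sum_mismatchTerm_mem_bounds hω _ _).2⟩

end Bounds

lemma sq_mul_two_mul_exp_le_rpow {m r : ℕ} (hm : 2 ≤ m) {ε α : ℝ} (hε : 0 < ε) (hα : 0 < α)
    (hr : 6 * (α + 3) * log m / ε ^ 2 ≤ r) :
    (m : ℝ) ^ 2 * (2 * exp (-(ε * r) ^ 2 / (2 * r))) ≤ (m : ℝ) ^ (-α) := by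
  have hm0 : (0 : ℝ) < m := by positivity
  have hlog2 : log 2 ≤ log m := log_le_log two_pos (by exact_mod_cast hm)
  have hlogm : 0 < log m := (log_pos one_lt_two).trans_le hlog2
  have hr' : 6 * (α + 3) * log m ≤ ε ^ 2 * r := by
    rw [div_le_iff₀ (by positivity)] at hr
    linarith
  have hrpos : (0 : ℝ) < r := by
    have : 0 < 6 * (α + 3) * log m := by positivity
    nlinarith
  have hexponent : -(ε * r) ^ 2 / (2 * r) = -(ε ^ 2 * r) / 2 := by
    field_simp
  rw [hexponent, ← rpow_natCast, rpow_def_of_pos hm0, rpow_def_of_pos hm0,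
    show (2 : ℝ) * exp (-(ε ^ 2 * r) / 2) = exp (log 2 + -(ε ^ 2 * r) / 2) by
      rw [exp_add, exp_log two_pos],
    ← exp_add, exp_le_exp]
  push_cast
  nlinarith [mul_pos hα hlogm]

theorem algFour_correct_general {σ : Type*} [Fintype σ] [DecidableEq σ]
    (n m : ℕ) (hcard : Fintype.card σ ≤ m) (hm2 : 2 ≤ m)
    (T : Fin n → Option σ) (P : Fin m → Option σ)
    (ε α : ℝ) (hε : 0 < ε) (hα : 0 < α)
    (r : ℕ) (hr : 6 * (α + 3) * Real.log m / ε ^ 2 ≤ (r : ℝ)) :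
    1 - (m : ℝ) ^ (-α) ≤
      ((Finset.univ.filter (fun ω : Fin r → σ → Bool =>
          ∀ (i : ℕ) (h : i + m ≤ n),
            (1 - ε) * (r : ℝ) * (hammingW T P i h : ℝ) ≤ (algFourCount T P ω i h : ℝ) ∧
            (algFourCount T P ω i h : ℝ) ≤
              (1 + ε) * (r : ℝ) * (hammingW T P i h : ℝ))).card : ℝ) /
        (Fintype.card (Fin r → σ → Bool) : ℝ) := by
  set K := Fintype.card (Fin r → σ → Bool)
  have hK : (K : ℝ) = Fintype.card (σ → Bool) ^ r := by simp [K]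
  set bad : (Fin r → σ → Bool) → Prop :=
    fun ω => ∃ a b, a ≠ b ∧ ε * r < |signSum (fun g => g a ≠ g b) ω|
  have hbad : (#{ω | bad ω} : ℝ) ≤ K * (m : ℝ) ^ (-α) :=
    calc (#{ω | bad ω} : ℝ)
        ≤ Fintype.card σ ^ 2 * (2 * (Fintype.card (σ → Bool) ^ r * exp (-(ε * r) ^ 2 / (2 * r)))) :=
          card_filter_exists_lt_abs_signSum_le (by positivity)
      _ ≤ m ^ 2 * (2 * (Fintype.card (σ → Bool) ^ r * exp (-(ε * r) ^ 2 / (2 * r)))) := by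
          gcongr
      _ = K * (m ^ 2 * (2 * exp (-(ε * r) ^ 2 / (2 * r)))) := by rw [hK]; ring
      _ ≤ K * (m : ℝ) ^ (-α) := by gcongr; exact sq_mul_two_mul_exp_le_rpow hm2 hε hα hr
  have hsplit : (#{ω | bad ω} : ℝ) + #{ω | ¬ bad ω} = K := by
    exact_mod_cast card_filter_add_card_filter_not (s := univ) fun ω => bad ω
  have hK0 : (0 : ℝ) < K := by exact_mod_cast Fintype.card_pos
  calc 1 - (m : ℝ) ^ (-α) ≤ (#{ω | ¬ bad ω} : ℝ) / K := by
        rw [le_div_iff₀ hK0]; linarith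
    _ ≤ _ := by
        gcongr with ω
        simp only [bad, not_exists, not_and, not_lt]
        exact algFourCount_mem_bounds T P

/-- Correctness of Algorithm 4 / Theorem 2. With `r` uniformly
random phases, `r ≥ 6(α+3)·ln(m)/ε²`, with probability at least `1 − m^{−α}` over the
choice of `ω : Fin r → σ → Bool`, simultaneously for every alignment offset `i`,
`(1−ε)·r·H_i ≤ C[i] ≤ (1+ε)·r·H_i`. -/
theorem algFour_correct {σ : Type*} [Fintype σ] [DecidableEq σ]
    (n m : ℕ) (hcard : Fintype.card σ ≤ m) (hm2 : 2 ≤ m) (hmn : m ≤ n)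
    (T : Fin n → Option σ) (P : Fin m → Option σ)
    (ε α : ℝ) (hε : 0 < ε) (hε1 : ε ≤ 1) (hα : 0 < α)
    (r : ℕ) (hr : 6 * (α + 3) * Real.log m / ε ^ 2 ≤ (r : ℝ)) :
    1 - (m : ℝ) ^ (-α) ≤
      ((Finset.univ.filter (fun ω : Fin r → σ → Bool =>
          ∀ (i : ℕ) (h : i + m ≤ n),
            (1 - ε) * (r : ℝ) * (hammingW T P i h : ℝ) ≤ (algFourCount T P ω i h : ℝ) ∧
            (algFourCount T P ω i h : ℝ) ≤
              (1 + ε) * (r : ℝ) * (hammingW T P i h : ℝ))).card : ℝ) /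
        (Fintype.card (Fin r → σ → Bool) : ℝ) :=
  algFour_correct_general n m hcard hm2 T P ε α hε hα r hr
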